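/- arXiv:math/0603602 — 5 statements merged into one kernel-verified Lean document; each statement's English description precedes it below -/
import Mathlib

section
/- Let k ≥ 1, t ≥ 0, k + t ≥ 2, r + 1 ≥ 3k + 2t, and n ≥ r + 1. Then there exists a graphic sequence π of length n with σ(π) = (r−1)(2n−r) − 2(n−r) − 2 that is not potentially K_{r+1} − (kP_2 ∪ tK_2)-graphic; namely π = ((n−1)^{r−2}, (r−2)^{n−r+2}), the sequence with r−2 terms equal to n−1 followed by n−r+2 terms equal to r−2. -/
open SimpleGraph

/-- The degree of a vertex `v` in a simple graph `G`. -/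
noncomputable def degOf {V : Type*} (G : SimpleGraph V) (v : V) : ℕ :=
  (G.neighborSet v).ncard

/-- `G` is a realization of the degree sequence `d`. -/
def Realizes {n : ℕ} (G : SimpleGraph (Fin n)) (d : Fin n → ℕ) : Prop :=
  ∃ e : Equiv.Perm (Fin n), ∀ i, degOf G (e i) = d i

/-- `d` is a graphic sequence. -/
def IsGraphic {n : ℕ} (d : Fin n → ℕ) : Prop :=
  ∃ G : SimpleGraph (Fin n), Realizes G d

/-- `G` contains (a copy of) `H` as a subgraph. -/
def ContainsSub {V W : Type*} (G : SimpleGraph V) (H : SimpleGraph W) : Prop :=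
  ∃ f : W → V, Function.Injective f ∧ ∀ ⦃a b⦄, H.Adj a b → G.Adj (f a) (f b)

/-- `d` is potentially `H`-graphic. -/
def Potentially {n m : ℕ} (d : Fin n → ℕ) (H : SimpleGraph (Fin m)) : Prop :=
  ∃ G : SimpleGraph (Fin n), Realizes G d ∧ ContainsSub G H

/-- The edges of a fixed copy of `kP₂ ∪ tK₂` : the `i`-th path `P₂` uses vertices
`3i, 3i+1, 3i+2` and the `j`-th edge `K₂` uses vertices `3k+2j, 3k+2j+1`. -/
def removedRel (k t : ℕ) (a b : ℕ) : Prop :=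
  (∃ i < k, (a = 3*i ∧ b = 3*i+1) ∨ (a = 3*i+1 ∧ b = 3*i+2)) ∨
  (∃ j < t, a = 3*k+2*j ∧ b = 3*k+2*j+1)

/-- The graph `K_{r+1} - (kP₂ ∪ tK₂)` : the complete graph on `r+1` vertices with the
edge set of a copy of `kP₂ ∪ tK₂` deleted. -/
def KminusKPT (r k t : ℕ) : SimpleGraph (Fin (r+1)) :=
  (⊤ : SimpleGraph (Fin (r+1))) \ SimpleGraph.fromRel (fun a b => removedRel k t a.val b.val)

/-- The join `K_{r-2} + \overline{K_{n-r+2}}` on `n` vertices: the first `r-2` vertices form a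
clique and are joined to all remaining vertices, which form an independent set. -/
def joinCompleteEmpty (n r : ℕ) : SimpleGraph (Fin n) where
  Adj a b := a ≠ b ∧ (a.val < r-2 ∨ b.val < r-2)
  symm := ⟨fun a b h => ⟨h.1.symm, h.2.symm⟩⟩
  loopless := ⟨fun a h => h.1 rfl⟩

lemma ncard_val_lt {n : ℕ} (m : ℕ) (h : m ≤ n) : {i : Fin n | i.val < m}.ncard = m := by
  have heq : {i : Fin n | i.val < m} = Set.range (Fin.castLE h) := by
    ext i
    simp only [Set.mem_setOf_eq, Set.mem_range]
    constructor
    · intro hi; exact ⟨⟨i.val, hi⟩, by ext; rfl⟩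
    · rintro ⟨j, rfl⟩; exact j.isLt
  rw [heq, ← Set.image_univ, Set.ncard_image_of_injective _ (Fin.castLE_injective h),
    Set.ncard_univ, Nat.card_eq_fintype_card, Fintype.card_fin]

lemma ncard_compl_singleton' {n : ℕ} (v : Fin n) : ({v}ᶜ : Set (Fin n)).ncard = n - 1 := by
  have h := Set.ncard_add_ncard_compl ({v} : Set (Fin n))
  rw [Set.ncard_singleton, Nat.card_eq_fintype_card, Fintype.card_fin] at h
  omega

lemma adj_all_of_deg {n : ℕ} {G : SimpleGraph (Fin n)} {v : Fin n}
    (h : degOf G v = n - 1) : ∀ w, w ≠ v → G.Adj v w := by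
  intro w hw
  have hsub : G.neighborSet v ⊆ ({v}ᶜ : Set (Fin n)) := by
    intro u hu
    simp only [Set.mem_compl_iff, Set.mem_singleton_iff]
    rintro rfl
    exact G.irrefl hu
  have heq := Set.eq_of_subset_of_ncard_le hsub
    (by rw [ncard_compl_singleton']; exact h.symm.le) (Set.toFinite _)
  have : w ∈ G.neighborSet v := by rw [heq]; simpa using hw
  exact this

lemma no_triangle {k t a b c : ℕ}
    (hab : removedRel k t a b ∨ removedRel k t b a)
    (hbc : removedRel k t b c ∨ removedRel k t c b)
    (hac : removedRel k t a c ∨ removedRel k t c a) : False := by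
  unfold removedRel at *
  rcases hab with (⟨i1,hi1,(⟨e1,e2⟩|⟨e1,e2⟩)⟩|⟨j1,hj1,e1,e2⟩)|(⟨i1,hi1,(⟨e1,e2⟩|⟨e1,e2⟩)⟩|⟨j1,hj1,e1,e2⟩) <;>
  rcases hbc with (⟨i2,hi2,(⟨g1,g2⟩|⟨g1,g2⟩)⟩|⟨j2,hj2,g1,g2⟩)|(⟨i2,hi2,(⟨g1,g2⟩|⟨g1,g2⟩)⟩|⟨j2,hj2,g1,g2⟩) <;>
  rcases hac with (⟨i3,hi3,(⟨f1,f2⟩|⟨f1,f2⟩)⟩|⟨j3,hj3,f1,f2⟩)|(⟨i3,hi3,(⟨f1,f2⟩|⟨f1,f2⟩)⟩|⟨j3,hj3,f1,f2⟩) <;>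
  omega

lemma deg_join {n r : ℕ} (h : r - 2 ≤ n) (i : Fin n) :
    degOf (joinCompleteEmpty n r) i = if i.val < r - 2 then n - 1 else r - 2 := by
  unfold degOf
  by_cases hi : i.val < r - 2
  · rw [if_pos hi]
    have hset : (joinCompleteEmpty n r).neighborSet i = ({i}ᶜ : Set (Fin n)) := by
      ext w
      simp only [mem_neighborSet, Set.mem_compl_iff, Set.mem_singleton_iff]
      constructor
      · intro hw; exact fun he => hw.1 he.symm
      · intro hw; exact ⟨fun he => hw he.symm, Or.inl hi⟩
    rw [hset, ncard_compl_singleton']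
  · rw [if_neg hi]
    have hset : (joinCompleteEmpty n r).neighborSet i = {w : Fin n | w.val < r - 2} := by
      ext w
      simp only [mem_neighborSet, Set.mem_setOf_eq]
      constructor
      · rintro ⟨hne, h1 | h2⟩
        · exact absurd h1 hi
        · exact h2
      · intro hw
        exact ⟨Fin.ne_of_val_ne (by omega), Or.inr hw⟩
    rw [hset, ncard_val_lt _ h]

/-- For `k ≥ 1`, `t ≥ 0`, `k + t ≥ 2`, `r + 1 ≥ 3k + 2t` and `n ≥ r + 1`,
the sequence `((n−1)^{r−2}, (r−2)^{n−r+2})` is a graphic sequence of length `n` with sum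
`(r−1)(2n−r) − 2(n−r) − 2` that is not potentially `K_{r+1} − (kP₂ ∪ tK₂)`-graphic. -/
theorem lower_bound_sequence (r n k t : ℕ) (hk : 1 ≤ k) (ht : 0 ≤ t) (hkt : 2 ≤ k + t)
    (hrkt : 3*k + 2*t ≤ r + 1) (hn : r + 1 ≤ n) :
    IsGraphic (fun i : Fin n => if i.val < r - 2 then n - 1 else r - 2) ∧
    (∑ i : Fin n, if i.val < r - 2 then n - 1 else r - 2)
        = (r-1)*(2*n-r) - 2*(n-r) - 2 ∧
    ¬ Potentially (fun i : Fin n => if i.val < r - 2 then n - 1 else r - 2)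
        (KminusKPT r k t) := by
  have hr : 4 ≤ r := by omega
  refine ⟨?_, ?_, ?_⟩
  · -- graphic
    exact ⟨joinCompleteEmpty n r, Equiv.refl _, fun i => deg_join (by omega) i⟩
  · -- sum
    have hcard : (Finset.univ.filter (fun i : Fin n => i.val < r - 2)).card = r - 2 := by
      have h1 := Set.ncard_coe_finset (Finset.univ.filter (fun i : Fin n => i.val < r - 2))
      rw [Finset.coe_filter] at h1
      simp only [Finset.mem_univ, true_and] at h1
      rw [← h1, ncard_val_lt _ (by omega)]
    have hsum : (∑ i : Fin n, if i.val < r - 2 then n - 1 else r - 2)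
        = (r-2)*(n-1) + (n-(r-2))*(r-2) := by
      rw [Finset.sum_ite, Finset.sum_const, Finset.sum_const, smul_eq_mul, smul_eq_mul, hcard]
      congr 2
      rw [Finset.filter_not, Finset.card_sdiff_of_subset (Finset.filter_subset _ _), hcard]
      simp
    rw [hsum]
    obtain ⟨q, rfl⟩ : ∃ q, r = q + 4 := ⟨r - 4, by omega⟩
    obtain ⟨m, rfl⟩ : ∃ m, n = q + 4 + m := ⟨n - (q+4), by omega⟩
    rw [show q+4-2 = q+2 by omega, show q+4+m-1 = q+3+m by omega,
        show q+4+m-(q+2) = m+2 by omega, show 2*(q+4+m)-(q+4) = q+4+2*m by omega,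
        show q+4+m-(q+4) = m by omega, show q+4-1 = q+3 by omega]
    have key : (q+3)*(q+4+2*m) = ((q+2)*(q+3+m) + (m+2)*(q+2)) + (2*m + 2) := by ring
    rw [key]
    generalize (q+2)*(q+3+m) + (m+2)*(q+2) = A
    omega
  · -- not potentially
    rintro ⟨G, ⟨e, he⟩, f, hfinj, hfadj⟩
    set A : Set (Fin n) := {v | degOf G v = n - 1} with hAdef
    have hdeg : ∀ v : Fin n, degOf G v = if (e.symm v).val < r - 2 then n - 1 else r - 2 := by
      intro v
      have h1 := he (e.symm v)
      simpa using h1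
    have hAcard : A.ncard = r - 2 := by
      have hA : A = e '' {i : Fin n | i.val < r - 2} := by
        ext v
        simp only [hAdef, Set.mem_setOf_eq, Set.mem_image]
        constructor
        · intro hv
          refine ⟨e.symm v, ?_, by simp⟩
          rw [hdeg v] at hv
          by_contra hc
          rw [if_neg hc] at hv
          omega
        · rintro ⟨i, hi, rfl⟩
          have := he i
          simpa [hi] using this
      rw [hA, Set.ncard_image_of_injective _ e.injective, ncard_val_lt _ (by omega)]
    have hBdeg : ∀ v ∉ A, degOf G v = r - 2 := by
      intro v hv
      rw [hdeg v]
      rw [hAdef, Set.mem_setOf_eq, hdeg v] at hv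
      by_cases hc : (e.symm v).val < r - 2
      · rw [if_pos hc] at hv; exact absurd rfl hv
      · rw [if_neg hc]
    have hNB : ∀ v ∉ A, G.neighborSet v = A := by
      intro v hv
      refine (Set.eq_of_subset_of_ncard_le ?_ ?_ (Set.toFinite _)).symm
      · intro u hu
        have hune : u ≠ v := fun h => hv (h ▸ hu)
        exact ((adj_all_of_deg hu) v hune.symm).symm
      · rw [hAcard]
        exact (hBdeg v hv).le
    have hBindep : ∀ v ∉ A, ∀ w ∉ A, ¬ G.Adj v w := by
      intro v hv w hw hadj
      have : w ∈ G.neighborSet v := hadj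
      rw [hNB v hv] at this
      exact hw this
    -- at least three vertices of the copy map outside A
    set T : Set (Fin (r+1)) := {x | f x ∈ A} with hTdef
    have hTcard : T.ncard ≤ r - 2 := by
      have h1 : f '' T ⊆ A := by rintro _ ⟨x, hx, rfl⟩; exact hx
      have h2 : (f '' T).ncard ≤ A.ncard := Set.ncard_le_ncard h1 (Set.toFinite _)
      rwa [Set.ncard_image_of_injective _ hfinj, hAcard] at h2
    have hTc : 3 ≤ (Tᶜ).ncard := by
      have h1 := Set.ncard_add_ncard_compl T
      rw [Nat.card_eq_fintype_card, Fintype.card_fin] at h1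
      omega
    obtain ⟨x, hx⟩ : (Tᶜ).Nonempty := Set.nonempty_of_ncard_ne_zero (by omega)
    have h2' : 2 ≤ (Tᶜ \ {x}).ncard := by
      rw [Set.ncard_diff_singleton_of_mem hx]; omega
    obtain ⟨y, hy⟩ : (Tᶜ \ {x}).Nonempty := Set.nonempty_of_ncard_ne_zero (by omega)
    have h1' : 1 ≤ ((Tᶜ \ {x}) \ {y}).ncard := by
      rw [Set.ncard_diff_singleton_of_mem hy]; omega
    obtain ⟨z, hz⟩ : ((Tᶜ \ {x}) \ {y}).Nonempty := Set.nonempty_of_ncard_ne_zero (by omega)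
    have hyx : y ≠ x := hy.2
    have hzy : z ≠ y := hz.2
    have hzx : z ≠ x := hz.1.2
    have hxT : x ∉ T := hx
    have hyT : y ∉ T := hy.1
    have hzT : z ∉ T := hz.1.1
    have key : ∀ a b : Fin (r+1), a ≠ b → a ∉ T → b ∉ T →
        removedRel k t a.val b.val ∨ removedRel k t b.val a.val := by
      intro a b hab ha hb
      have hnadj : ¬ G.Adj (f a) (f b) := hBindep _ ha _ hb
      have hnH : ¬ (KminusKPT r k t).Adj a b := fun h => hnadj (hfadj h)
      have h2 : (SimpleGraph.fromRel (fun a b : Fin (r+1) => removedRel k t a.val b.val)).Adj a b := by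
        by_contra hc
        exact hnH (by simp only [KminusKPT, sdiff_adj, top_adj]; exact ⟨hab, hc⟩)
      exact ((SimpleGraph.fromRel_adj _ a b).mp h2).2
    exact no_triangle (key x y (Ne.symm hyx) hxT hyT)
      (key y z (Ne.symm hzy) hyT hzT) (key x z (Ne.symm hzx) hxT hzT)
end

section
/- Let k ≥ 1, t ≥ 0, k + t ≥ 2, r + 1 ≥ 3k + 2t, and n ≥ r + 1. Then the graph G = K_{r−2} + \overline{K_{n−r+2}} (the join of a complete graph on r−2 vertices with an edgeless graph on n−r+2 vertices) does not contain K_{r+1} − (kP_2 ∪ tK_2) as a subgraph. -/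
open SimpleGraph

lemma removed_succ {k t a b : ℕ} (h : removedRel k t a b) : b = a + 1 := by
  rcases h with ⟨i, _, h | h⟩ | ⟨j, _, h⟩ <;> omega

/-- For `k ≥ 1`, `t ≥ 0`, `k + t ≥ 2`, `r + 1 ≥ 3k + 2t` and `n ≥ r + 1`,
the join `K_{r−2} + \overline{K_{n−r+2}}` does not contain `K_{r+1} − (kP₂ ∪ tK₂)`
as a subgraph. -/
theorem join_not_contains (r n k t : ℕ) (hk : 1 ≤ k) (ht : 0 ≤ t) (hkt : 2 ≤ k + t)
    (hrkt : 3*k + 2*t ≤ r + 1) (hn : r + 1 ≤ n) :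
    ¬ ContainsSub (joinCompleteEmpty n r) (KminusKPT r k t) := by
  rintro ⟨f, hinj, hadj⟩
  classical
  -- Vertices mapped into the clique part are at most r-2 many.
  have hT : (Finset.univ.filter (fun v : Fin (r+1) => (f v).val < r-2)).card ≤ r - 2 := by
    have himg : ((Finset.univ.filter (fun v : Fin (r+1) => (f v).val < r-2)).image
        (fun v => (f v).val)) ⊆ Finset.range (r-2) := by
      intro x hx
      simp only [Finset.mem_image, Finset.mem_filter] at hx
      obtain ⟨v, ⟨-, hv⟩, rfl⟩ := hx
      simpa using hv
    have hcard := Finset.card_le_card himg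
    rwa [Finset.card_image_of_injective _
        (fun a b hab => hinj (Fin.val_injective hab)), Finset.card_range] at hcard
  -- So at least 3 vertices map into the independent part.
  have hSc : 2 < (Finset.univ.filter (fun v : Fin (r+1) => ¬ (f v).val < r-2)).card := by
    have hsum := Finset.card_filter_add_card_filter_not
      (s := (Finset.univ : Finset (Fin (r+1)))) (p := fun v => (f v).val < r-2)
    rw [Finset.card_univ, Fintype.card_fin] at hsum
    omega
  obtain ⟨a, b, c, ha, hb, hc, hab, hac, hbc⟩ := Finset.two_lt_card_iff.mp hSc
  simp only [Finset.mem_filter, Finset.mem_univ, true_and] at ha hb hc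
  -- Any two such vertices must be nonadjacent in H, hence labels differ by 1.
  have key : ∀ x y : Fin (r+1), ¬ (f x).val < r-2 → ¬ (f y).val < r-2 → x ≠ y →
      y.val = x.val + 1 ∨ x.val = y.val + 1 := by
    intro x y hx hy hxy
    by_contra h
    push_neg at h
    have hHadj : (KminusKPT r k t).Adj x y := by
      rw [KminusKPT, SimpleGraph.sdiff_adj, SimpleGraph.top_adj, SimpleGraph.fromRel_adj]
      refine ⟨hxy, ?_⟩
      rintro ⟨-, hrel | hrel⟩
      · exact h.1 (removed_succ hrel)
      · exact h.2 (removed_succ hrel)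
    rcases (hadj hHadj).2 with h1 | h1
    · exact hx h1
    · exact hy h1
  have hvab : a.val ≠ b.val := fun h => hab (Fin.val_injective h)
  have hvac : a.val ≠ c.val := fun h => hac (Fin.val_injective h)
  have hvbc : b.val ≠ c.val := fun h => hbc (Fin.val_injective h)
  have k1 := key a b ha hb hab
  have k2 := key a c ha hc hac
  have k3 := key b c hb hc hbc
  omega
end

section
/- Let r ≥ 4, n ≥ 4r+10, and let π = (d_1, d_2, ..., d_n) be a graphic sequence with σ(π) ≥ (r−1)(2n−r) − 2(n−r). If d_{r−2} ≤ r − 1, then π is exactly the sequence ((n−1)^{r−3}, (r−1)^{n−r+3}), i.e., r−3 terms equal to n−1 followed by n−r+3 terms equal to r−1. -/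
open SimpleGraph

/-- Let `r ≥ 4`, `n ≥ 4r+10`, and let `d` be a graphic sequence of length `n`
with sum at least `(r−1)(2n−r) − 2(n−r)`. If the `(r−2)`-th term satisfies `d_{r−2} ≤ r − 1`,
then `d` is exactly `((n−1)^{r−3}, (r−1)^{n−r+3})`. -/
theorem small_term_forces_sequence (r n : ℕ) (hr : 4 ≤ r) (hn : 4*r + 10 ≤ n)
    (d : Fin n → ℕ) (hd : Antitone d) (hg : IsGraphic d)
    (hs : (r-1)*(2*n-r) - 2*(n-r) ≤ ∑ i, d i)
    (hsmall : d ⟨r - 3, by omega⟩ ≤ r - 1) :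
    ∀ i : Fin n, d i = if i.val < r - 3 then n - 1 else r - 1 := by
  have hnpos : 0 < n := by omega
  -- each degree is at most n - 1
  have hub : ∀ i : Fin n, d i ≤ n - 1 := by
    classical
    obtain ⟨G, e, he⟩ := hg
    intro i
    rw [← he i]
    have : degOf G (e i) = G.degree (e i) := by
      simp [degOf, SimpleGraph.degree, SimpleGraph.neighborFinset, Set.ncard_eq_toFinset_card']
    rw [this]
    have := G.degree_lt_card_verts (e i)
    simp only [Fintype.card_fin] at this
    omega
  set f : Fin n → ℕ := fun i => if i.val < r - 3 then n - 1 else r - 1 with hf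
  have hle : ∀ i : Fin n, d i ≤ f i := by
    intro i
    simp only [hf]
    split
    · exact hub i
    · rename_i h
      exact le_trans (hd (by exact Fin.mk_le_of_le_val (by omega))) hsmall
  -- sum of f
  have hfsum : ∑ i, f i = (r-1)*(2*n-r) - 2*(n-r) := by
    have hcard : (Finset.univ.filter (fun i : Fin n => i.val < r - 3)).card = r - 3 := by
      have : (Finset.univ.filter (fun i : Fin n => i.val < r - 3)) =
          Finset.Iio (⟨r - 3, by omega⟩ : Fin n) := by
        ext i
        simp [Finset.mem_Iio, Fin.lt_def]
      rw [this, Fin.card_Iio]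
    rw [hf, Finset.sum_ite, Finset.sum_const, Finset.sum_const, hcard]
    have hcard2 : (Finset.univ.filter (fun i : Fin n => ¬ i.val < r - 3)).card = n - (r-3) := by
      have := Finset.card_filter_add_card_filter_not
        (s := (Finset.univ : Finset (Fin n))) (p := fun i : Fin n => i.val < r - 3)
      simp only [Finset.card_univ, Fintype.card_fin] at this
      omega
    rw [hcard2]
    simp only [smul_eq_mul]
    -- arithmetic
    obtain ⟨s, rfl⟩ : ∃ s, r = s + 4 := ⟨r - 4, by omega⟩
    obtain ⟨m, rfl⟩ : ∃ m, n = 4*(s+4) + 10 + m := ⟨n - (4*(s+4)+10), by omega⟩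
    simp only [show s+4-3 = s+1 from by omega, show 4*(s+4)+10+m-1 = 4*s+25+m from by omega,
      show 4*(s+4)+10+m-(s+1) = 3*s+25+m from by omega, show s+4-1 = s+3 from by omega,
      show 2*(4*(s+4)+10+m)-(s+4) = 7*s+48+2*m from by omega,
      show 4*(s+4)+10+m-(s+4) = 3*s+22+m from by omega]
    symm
    apply Nat.sub_eq_of_eq_add
    ring
  -- conclusion
  intro i
  by_contra hne
  have hlt : d i < f i := lt_of_le_of_ne (hle i) hne
  have : ∑ j, d j < ∑ j, f j :=
    Finset.sum_lt_sum (fun j _ => hle j) ⟨i, Finset.mem_univ i, hlt⟩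
  omega
end

section
/- Let r ≥ 4, n ≥ r, and let π = (d_1, d_2, ..., d_n) be a graphic sequence with d_r ≤ r − 2. Then σ(π) ≤ (r−1)(2n−r) − 2(n−r) − 2. Consequently, any graphic sequence π of length n with σ(π) ≥ (r−1)(2n−r) − 2(n−r) satisfies d_r ≥ r − 1. -/
open SimpleGraph

lemma sum_deg_split' {n : ℕ} (G : SimpleGraph (Fin n)) [DecidableRel G.Adj] (A : Finset (Fin n)) :
    ∑ v ∈ A, G.degree v ≤ A.card * (A.card - 1) + ∑ v ∈ Aᶜ, G.degree v := by
  have hdeg : ∀ v, G.degree v = ∑ w, if G.Adj v w then 1 else 0 := by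
    intro v
    rw [SimpleGraph.degree, SimpleGraph.neighborFinset_eq_filter, Finset.card_filter]
  have hsplit : ∀ v, G.degree v =
      (∑ w ∈ A, if G.Adj v w then 1 else 0) + ∑ w ∈ Aᶜ, if G.Adj v w then 1 else 0 := by
    intro v
    rw [hdeg v, ← Finset.sum_add_sum_compl A]
  have h1 : (∑ v ∈ A, ∑ w ∈ A, if G.Adj v w then 1 else 0) ≤ A.card * (A.card - 1) := by
    calc (∑ v ∈ A, ∑ w ∈ A, if G.Adj v w then 1 else 0)
        ≤ ∑ _v ∈ A, (A.card - 1) := by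
          apply Finset.sum_le_sum
          intro v hv
          calc (∑ w ∈ A, if G.Adj v w then 1 else 0) = (A.filter (G.Adj v)).card := by
                rw [Finset.card_filter]
            _ ≤ (A.erase v).card := by
                apply Finset.card_le_card
                intro w hw
                simp only [Finset.mem_filter] at hw
                exact Finset.mem_erase.mpr ⟨(G.ne_of_adj hw.2).symm, hw.1⟩
            _ ≤ A.card - 1 := le_of_eq (Finset.card_erase_of_mem hv)
      _ = A.card * (A.card - 1) := by rw [Finset.sum_const, smul_eq_mul]
  have h2 : (∑ v ∈ A, ∑ w ∈ Aᶜ, if G.Adj v w then 1 else 0) ≤ ∑ w ∈ Aᶜ, G.degree w := by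
    rw [Finset.sum_comm]
    apply Finset.sum_le_sum
    intro w _
    calc (∑ v ∈ A, if G.Adj v w then 1 else 0) = (A.filter (fun v => G.Adj v w)).card := by
          rw [Finset.card_filter]
      _ ≤ (Finset.univ.filter (G.Adj w)).card := by
          apply Finset.card_le_card
          intro v hv
          simp only [Finset.mem_filter] at hv ⊢
          exact ⟨Finset.mem_univ v, hv.2.symm⟩
      _ = G.degree w := by rw [SimpleGraph.degree, SimpleGraph.neighborFinset_eq_filter]
  calc ∑ v ∈ A, G.degree v
      = (∑ v ∈ A, ∑ w ∈ A, if G.Adj v w then 1 else 0)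
        + ∑ v ∈ A, ∑ w ∈ Aᶜ, if G.Adj v w then 1 else 0 := by
        rw [← Finset.sum_add_distrib]; exact Finset.sum_congr rfl fun v _ => hsplit v
    _ ≤ A.card * (A.card - 1) + ∑ v ∈ Aᶜ, G.degree v := Nat.add_le_add h1 h2

lemma dr_main (r n : ℕ) (hr : 4 ≤ r) (hn : r ≤ n) (d : Fin n → ℕ) (hd : Antitone d)
    (hg : IsGraphic d) (hdr : d ⟨r - 1, Nat.lt_of_lt_of_le (Nat.sub_lt (by omega) Nat.one_pos) hn⟩ ≤ r - 2) :
    ∑ i, d i ≤ (r-1)*(2*n-r) - 2*(n-r) - 2 := by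
  classical
  obtain ⟨G, e, he⟩ := hg
  have hdegOf : ∀ v, degOf G v = G.degree v := by
    intro v
    rw [degOf, SimpleGraph.degree, SimpleGraph.neighborFinset_def, Set.ncard_eq_toFinset_card']
  set S : Finset (Fin n) := Finset.univ.filter (fun i : Fin n => (i : ℕ) < r - 1) with hS
  set A : Finset (Fin n) := S.image e with hA
  have hScard : S.card = r - 1 := by
    have : S = Finset.map (Fin.castLEEmb (show r - 1 ≤ n by omega)) Finset.univ := by
      ext i
      simp only [hS, Finset.mem_filter, Finset.mem_univ, true_and, Finset.mem_map]
      constructor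
      · intro hi
        exact ⟨⟨i.val, hi⟩, Fin.ext rfl⟩
      · rintro ⟨j, -, rfl⟩
        simpa using j.isLt
    rw [this, Finset.card_map, Finset.card_univ, Fintype.card_fin]
  have hAcard : A.card = r - 1 := by
    rw [hA, Finset.card_image_of_injective _ e.injective, hScard]
  have hAsum : ∑ v ∈ A, G.degree v = ∑ i ∈ S, d i := by
    rw [hA, Finset.sum_image (fun a _ b _ h => e.injective h)]
    exact Finset.sum_congr rfl fun i _ => by rw [← hdegOf, he]
  have htotal : ∑ v, G.degree v = ∑ i, d i := by
    rw [← Equiv.sum_comp e (fun v => G.degree v)]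
    exact Finset.sum_congr rfl fun i _ => by rw [← hdegOf, he]
  have hcomplA : ∑ v ∈ A, G.degree v + ∑ v ∈ Aᶜ, G.degree v = ∑ i, d i := by
    rw [Finset.sum_add_sum_compl, htotal]
  have hcomplS : ∑ i ∈ S, d i + ∑ i ∈ Sᶜ, d i = ∑ i, d i :=
    Finset.sum_add_sum_compl S d
  have hAc : ∑ v ∈ Aᶜ, G.degree v = ∑ i ∈ Sᶜ, d i := by omega
  have hSc : ∑ i ∈ Sᶜ, d i ≤ (n - (r - 1)) * (r - 2) := by
    have hb : ∀ i ∈ Sᶜ, d i ≤ r - 2 := by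
      intro i hi
      simp only [hS, Finset.mem_compl, Finset.mem_filter, Finset.mem_univ, true_and,
        not_lt] at hi
      exact le_trans (hd (show (⟨r - 1, by omega⟩ : Fin n) ≤ i from hi)) hdr
    calc ∑ i ∈ Sᶜ, d i ≤ ∑ _i ∈ Sᶜ, (r - 2) := Finset.sum_le_sum hb
      _ = (n - (r - 1)) * (r - 2) := by
        rw [Finset.sum_const, smul_eq_mul, Finset.card_compl, hScard, Fintype.card_fin]
  have hmain := sum_deg_split' G A
  rw [hAcard, hAsum, hAc] at hmain
  -- now pure arithmetic
  obtain ⟨s, rfl⟩ : ∃ s, r = s + 4 := ⟨r - 4, by omega⟩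
  obtain ⟨m, rfl⟩ : ∃ m, n = (s + 4) + m := ⟨n - (s + 4), by omega⟩
  rw [show s + 4 - 1 = s + 3 by omega] at hmain hSc ⊢
  rw [show s + 3 - 1 = s + 2 by omega] at hmain
  rw [show s + 4 + m - (s + 3) = m + 1 by omega, show s + 4 - 2 = s + 2 by omega] at hSc
  rw [show 2 * (s + 4 + m) - (s + 4) = s + 4 + 2 * m by omega,
      show s + 4 + m - (s + 4) = m by omega]
  have hP : (s + 3) * (s + 4 + 2 * m)
      = (s + 3) * (s + 2) + 2 * ((m + 1) * (s + 2)) + 2 * m + 2 := by ring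
  rw [hP]
  omega


/-- Let `r ≥ 4` and `n ≥ r`. If `d` is a graphic sequence of length `n` with
`d_r ≤ r − 2`, then `σ(d) ≤ (r−1)(2n−r) − 2(n−r) − 2`. Consequently, every graphic sequence
of length `n` with `σ(d) ≥ (r−1)(2n−r) − 2(n−r)` satisfies `d_r ≥ r − 1`. -/
theorem dr_large (r n : ℕ) (hr : 4 ≤ r) (hn : r ≤ n) :
    (∀ d : Fin n → ℕ, Antitone d → IsGraphic d → d ⟨r - 1, by omega⟩ ≤ r - 2 →
      ∑ i, d i ≤ (r-1)*(2*n-r) - 2*(n-r) - 2) ∧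
    (∀ d : Fin n → ℕ, Antitone d → IsGraphic d →
      (r-1)*(2*n-r) - 2*(n-r) ≤ ∑ i, d i → r - 1 ≤ d ⟨r - 1, by omega⟩) := by
  refine ⟨fun d hd hg hdr => dr_main r n hr hn d hd hg hdr, ?_⟩
  intro d hd hg hsum
  by_contra hlt
  push_neg at hlt
  have hdr : d ⟨r - 1, by omega⟩ ≤ r - 2 := by omega
  have h1 := dr_main r n hr hn d hd hg hdr
  have hT : 2 ≤ (r-1)*(2*n-r) - 2*(n-r) := by
    obtain ⟨s, rfl⟩ : ∃ s, r = s + 4 := ⟨r - 4, by omega⟩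
    obtain ⟨m, rfl⟩ : ∃ m, n = (s + 4) + m := ⟨n - (s + 4), by omega⟩
    rw [show s + 4 - 1 = s + 3 by omega, show 2 * (s + 4 + m) - (s + 4) = s + 4 + 2 * m by omega,
      show s + 4 + m - (s + 4) = m by omega]
    have hP : (s + 3) * (s + 4 + 2 * m) = (s + 3) * (s + 4) + 2 * ((s + 3) * m) := by ring
    rw [hP]
    have h12 : 12 ≤ (s + 3) * (s + 4) := by nlinarith
    have h13 : m ≤ (s + 3) * m := Nat.le_mul_of_pos_left m (by omega)
    omega
  omega
end

section
/- Let r ≥ 4, n ≥ 4r+10, and let π = (d_1, d_2, ..., d_n) be a graphic sequence with σ(π) ≥ (r−1)(2n−r) − 2(n−r). Then d_{r+1} ≥ r − 2. -/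
open SimpleGraph

lemma key_sum_bound {V : Type*} [Fintype V] [DecidableEq V] (G : SimpleGraph V)
    [DecidableRel G.Adj] (S : Finset V) :
    ∑ v ∈ S, G.degree v ≤ S.card * (S.card - 1) + ∑ v ∈ Sᶜ, G.degree v := by
  have hdeg : ∀ v : V, G.degree v = (S.filter (G.Adj v)).card + (Sᶜ.filter (G.Adj v)).card := by
    intro v
    rw [← Finset.card_union_of_disjoint (Finset.disjoint_filter_filter disjoint_compl_right),
      ← Finset.filter_union, Finset.union_compl]
    simp [SimpleGraph.degree, SimpleGraph.neighborFinset_eq_filter]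
  calc ∑ v ∈ S, G.degree v
      = ∑ v ∈ S, (S.filter (G.Adj v)).card + ∑ v ∈ S, (Sᶜ.filter (G.Adj v)).card := by
        rw [← Finset.sum_add_distrib]; exact Finset.sum_congr rfl fun v _ => hdeg v
    _ ≤ S.card * (S.card - 1) + ∑ v ∈ Sᶜ, G.degree v := by
        have h1 : ∑ v ∈ S, (S.filter (G.Adj v)).card ≤ S.card * (S.card - 1) := by
          have := Finset.sum_le_card_nsmul S (fun v => (S.filter (G.Adj v)).card) (S.card - 1)
            (fun v hv => by
              have hsub : S.filter (G.Adj v) ⊆ S.erase v := fun w hw => by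
                simp only [Finset.mem_filter] at hw
                exact Finset.mem_erase.2 ⟨fun h => G.loopless.irrefl v (h ▸ hw.2), hw.1⟩
              calc (S.filter (G.Adj v)).card ≤ (S.erase v).card := Finset.card_le_card hsub
                _ = S.card - 1 := Finset.card_erase_of_mem hv)
          simpa [mul_comm] using this
        have h2 : ∑ v ∈ S, (Sᶜ.filter (G.Adj v)).card = ∑ w ∈ Sᶜ, (S.filter (G.Adj w)).card := by
          simp only [Finset.card_filter]
          rw [Finset.sum_comm]
          refine Finset.sum_congr rfl fun w _ => Finset.sum_congr rfl fun v _ => ?_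
          simp only [G.adj_comm]
        have h3 : ∑ w ∈ Sᶜ, (S.filter (G.Adj w)).card ≤ ∑ w ∈ Sᶜ, G.degree w :=
          Finset.sum_le_sum fun w _ => by rw [hdeg w]; exact Nat.le_add_right _ _
        omega

/-- Let `r ≥ 4`, `n ≥ 4r+10`, and let `d` be a graphic sequence of length `n`
with sum at least `(r−1)(2n−r) − 2(n−r)`. Then the `(r+1)`-th term satisfies
`d_{r+1} ≥ r − 2`. -/
theorem drplusone_large (r n : ℕ) (hr : 4 ≤ r) (hn : 4*r + 10 ≤ n)
    (d : Fin n → ℕ) (hd : Antitone d) (hg : IsGraphic d)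
    (hs : (r-1)*(2*n-r) - 2*(n-r) ≤ ∑ i, d i) :
    r - 2 ≤ d ⟨r, by omega⟩ := by
  classical
  obtain ⟨G, e, he⟩ := hg
  have hdegOf : ∀ v, degOf G v = G.degree v := by
    intro v
    simp [degOf, SimpleGraph.degree, SimpleGraph.neighborFinset,
      Set.ncard_eq_toFinset_card']
  by_contra hlt
  push_neg at hlt
  have hrn : r ≤ n := by omega
  set T : Finset (Fin n) := Finset.univ.filter (fun i => i.val < r) with hT
  set S : Finset (Fin n) := T.image e with hSdef
  have hTcard : T.card = r := by
    have : T = Finset.map (Fin.castLEEmb hrn) Finset.univ := by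
      ext i
      simp only [hT, Finset.mem_filter, Finset.mem_univ, true_and, Finset.mem_map,
        Fin.castLEEmb_apply]
      constructor
      · intro h; exact ⟨⟨i.val, h⟩, by ext; simp⟩
      · rintro ⟨j, rfl⟩; exact j.isLt
    simp [this]
  have hSsum : ∑ v ∈ S, G.degree v = ∑ i ∈ T, d i := by
    rw [hSdef, Finset.sum_image (fun a _ b _ h => e.injective h)]
    exact Finset.sum_congr rfl fun i _ => by rw [← he i, hdegOf]
  have hScompl : Sᶜ = (Finset.univ.filter (fun i : Fin n => ¬ i.val < r)).image e := by
    ext v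
    simp only [Finset.mem_compl, hSdef, Finset.mem_image, hT, Finset.mem_filter,
      Finset.mem_univ, true_and]
    constructor
    · intro h
      refine ⟨e.symm v, fun hc => h ⟨e.symm v, hc, by simp⟩, by simp⟩
    · rintro ⟨i, hi, rfl⟩ ⟨j, hj, hji⟩
      exact hi (e.injective hji ▸ hj)
  have hScsum : ∑ v ∈ Sᶜ, G.degree v
      = ∑ i ∈ Finset.univ.filter (fun i : Fin n => ¬ i.val < r), d i := by
    rw [hScompl, Finset.sum_image (fun a _ b _ h => e.injective h)]
    exact Finset.sum_congr rfl fun i _ => by rw [← he i, hdegOf]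
  have hScard : S.card = r := by
    rw [hSdef, Finset.card_image_of_injective _ e.injective, hTcard]
  have hkey := key_sum_bound G S
  rw [hSsum, hScsum, hScard] at hkey
  -- bound the tail sum
  have hTc_card : (Finset.univ.filter (fun i : Fin n => ¬ i.val < r)).card = n - r := by
    have := Finset.card_filter_add_card_filter_not
      (s := (Finset.univ : Finset (Fin n))) (p := fun i : Fin n => i.val < r)
    simp only [Finset.card_univ, Fintype.card_fin] at this
    rw [← hT] at this
    omega
  have hB : ∑ i ∈ Finset.univ.filter (fun i : Fin n => ¬ i.val < r), d i
      ≤ (n - r) * (r - 3) := by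
    calc ∑ i ∈ Finset.univ.filter (fun i : Fin n => ¬ i.val < r), d i
        ≤ ∑ _i ∈ Finset.univ.filter (fun i : Fin n => ¬ i.val < r), (r - 3) := by
          refine Finset.sum_le_sum fun i hi => ?_
          simp only [Finset.mem_filter] at hi
          have := hd (show (⟨r, by omega⟩ : Fin n) ≤ i from by
            simpa [Fin.le_def] using by omega)
          omega
      _ = (n - r) * (r - 3) := by rw [Finset.sum_const, hTc_card, smul_eq_mul]
  have htotal : ∑ i, d i = ∑ i ∈ T, d i
      + ∑ i ∈ Finset.univ.filter (fun i : Fin n => ¬ i.val < r), d i := by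
    rw [hT, Finset.sum_filter_add_sum_filter_not]
  have hfinal : (r-1)*(2*n-r) - 2*(n-r) ≤ r * (r - 1) + 2 * ((n - r) * (r - 3)) := by
    omega
  have h2 : 2*(n-r) ≤ (r-1)*(2*n-r) :=
    le_trans (by omega) (Nat.mul_le_mul_right (2*n-r) (show 2 ≤ r - 1 by omega))
  zify [h2, show 1 ≤ r by omega, show r ≤ 2*n by omega, hrn, show 3 ≤ r by omega] at hfinal
  have hn' : (4*r + 10 : ℤ) ≤ n := by exact_mod_cast hn
  have hr' : (4 : ℤ) ≤ r := by exact_mod_cast hr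
  nlinarith [hfinal, hn', hr']
end
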